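/- arXiv:math/9610223 — 3 statements merged into one kernel-verified Lean document; each statement's English description precedes it below -/
import Mathlib

section
/- Let $y : [0,\infty) \to (0,\infty)$ be a positive $C^1$ function, and suppose $[0,\infty)$ is partitioned into consecutive intervals alternating between 'fast' intervals of length at most $t_0$ on which $|y'(t)| \le A\, y(t)$, and 'slow' intervals of length at least $d$ on which $|y'(t)| \le \frac{\epsilon}{2} y(t)$, starting with either type. Then $\limsup_{t\to\infty} \frac{1}{2t}\log y(t) \le \frac{A t_0}{2d} + \frac{\epsilon}{4}$. -/
/-!
On each interval `log y` is Lipschitz, with constant `A` on fast intervals and `ε / 2` on slow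
ones. A fast interval contributes at most `A t₀` to `log y`, and this is amortised over the slow
interval that follows it, of length at least `d`, at rate `A t₀ / d`. Hence
`|log y t - log y 0| ≤ (A t₀ / d + ε / 2) t + O(1)`, and dividing by `2 t` gives the bound.
-/

open Filter Real Topology Set

theorem abs_log_sub_log_le_of_abs_deriv_le {y : ℝ → ℝ} {p q c x : ℝ}
    (hpos : ∀ t ∈ Icc p q, 0 < y t) (hdiff : ∀ t ∈ Icc p q, DifferentiableAt ℝ y t)
    (hbound : ∀ t ∈ Icc p q, |deriv y t| ≤ c * y t) (hx : x ∈ Icc p q) :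
    |log (y x) - log (y p)| ≤ c * (x - p) := by
  have hderiv : ∀ t ∈ Icc p q,
      HasDerivWithinAt (fun t => log (y t)) (deriv y t / y t) (Icc p q) t :=
    fun t ht => ((hdiff t ht).hasDerivAt.log (hpos t ht).ne').hasDerivWithinAt
  have hbound' : ∀ t ∈ Ico p q, ‖deriv y t / y t‖ ≤ c := fun t ht => by
    have hy := hpos t (Ico_subset_Icc_self ht)
    rw [norm_div, Real.norm_eq_abs, Real.norm_eq_abs, abs_of_pos hy, div_le_iff₀ hy]
    exact hbound t (Ico_subset_Icc_self ht)
  simpa using norm_image_sub_le_of_norm_deriv_le_segment' hderiv hbound' x hx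

theorem exists_mem_Ico_of_tendsto_atTop {a : ℕ → ℝ} (htop : Tendsto a atTop atTop) {t : ℝ}
    (ht : a 0 ≤ t) : ∃ n, t ∈ Ico (a n) (a (n + 1)) := by
  classical
  have hex : ∃ m, t < a m := (htop.eventually_gt_atTop t).exists
  obtain ⟨n, hn⟩ : ∃ n, Nat.find hex = n + 1 :=
    Nat.exists_eq_succ_of_ne_zero fun h => (Nat.find_spec hex).not_ge (h ▸ ht)
  exact ⟨n, not_lt.1 (Nat.find_min hex (by omega)), hn ▸ Nat.find_spec hex⟩

theorem limsup_div_le_of_abs_le {f : ℝ → ℝ} {B K : ℝ} (h : ∀ᶠ t in atTop, |f t| ≤ B * t + K) :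
    limsup (fun t => f t / t) atTop ≤ B := by
  have hlim : Tendsto (fun t => B + K / t) atTop (𝓝 B) := by
    simpa using tendsto_const_nhds.add ((tendsto_const_nhds (x := K)).div_atTop tendsto_id)
  have habs : ∀ᶠ t in atTop, |f t / t| ≤ B + K / t := by
    filter_upwards [h, eventually_gt_atTop 0] with t ht htpos
    rw [abs_div, abs_of_pos htpos, div_le_iff₀ htpos, add_mul, div_mul_cancel₀ _ htpos.ne']
    linarith
  have hcobdd : IsCoboundedUnder (· ≤ ·) atTop (fun t => f t / t) := by
    refine isCoboundedUnder_le_of_eventually_le atTop (x := -(B + 1)) ?_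
    filter_upwards [habs, hlim.eventually_le_const (lt_add_one B)] with t ht hB
    linarith [neg_abs_le (f t / t)]
  calc limsup (fun t => f t / t) atTop
      ≤ limsup (fun t => B + K / t) atTop :=
        limsup_le_limsup (habs.mono fun t ht => (le_abs_self _).trans ht) hcobdd
          hlim.isBoundedUnder_le
    _ = B := hlim.limsup_eq

section Alternating

variable {a : ℕ → ℝ} {fast : ℕ → Bool} {M s d : ℝ}

theorem abs_sub_le_of_alternating_increments {u : ℕ → ℝ} (hM : 0 ≤ M) (hs : 0 ≤ s) (hd : 0 < d)
    (hmono : Monotone a) (halt : ∀ n, fast (n + 1) = !fast n)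
    (hfast : ∀ n, fast n = true → |u (n + 1) - u n| ≤ M)
    (hslow : ∀ n, fast n = false →
      d ≤ a (n + 1) - a n ∧ |u (n + 1) - u n| ≤ s * (a (n + 1) - a n))
    (n : ℕ) :
    -- the last term is the contribution of a fast interval not yet paid for by a slow one
    |u n - u 0| ≤ (M / d + s) * (a n - a 0) + if fast n then 0 else M := by
  induction n with
  | zero => cases fast 0 <;> simp [hM]
  | succ n ih =>
    have htri := abs_sub_le (u (n + 1)) (u n) (u 0)
    rw [halt n]
    cases hn : fast n
    · obtain ⟨hlen, hinc⟩ := hslow n hn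
      have hpaid : M ≤ M / d * (a (n + 1) - a n) := by
        rw [div_mul_eq_mul_div, le_div_iff₀ hd]
        exact mul_le_mul_of_nonneg_left hlen hM
      simp only [hn, Bool.not_false, Bool.false_eq_true, if_true, if_false, add_zero] at ih ⊢
      linarith
    · have hstep : (M / d + s) * (a n - a 0) ≤ (M / d + s) * (a (n + 1) - a 0) :=
        mul_le_mul_of_nonneg_left (by linarith [hmono n.le_succ]) (by positivity)
      simp only [hn, Bool.not_true, Bool.false_eq_true, if_true, if_false, add_zero] at ih ⊢
      linarith [hfast n hn]

theorem abs_sub_le_of_alternating {g : ℝ → ℝ} (hM : 0 ≤ M) (hs : 0 ≤ s) (hd : 0 < d)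
    (hmono : Monotone a) (htop : Tendsto a atTop atTop) (halt : ∀ n, fast (n + 1) = !fast n)
    (hfast : ∀ n, fast n = true → ∀ t ∈ Icc (a n) (a (n + 1)), |g t - g (a n)| ≤ M)
    (hslow : ∀ n, fast n = false → d ≤ a (n + 1) - a n ∧
      ∀ t ∈ Icc (a n) (a (n + 1)), |g t - g (a n)| ≤ s * (t - a n))
    {t : ℝ} (ht : a 0 ≤ t) : |g t - g (a 0)| ≤ (M / d + s) * (t - a 0) + 2 * M := by
  have hright : ∀ n, a (n + 1) ∈ Icc (a n) (a (n + 1)) := fun n => ⟨hmono n.le_succ, le_rfl⟩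
  have hbreak := abs_sub_le_of_alternating_increments (u := g ∘ a) hM hs hd hmono halt
    (fun n hn => hfast n hn _ (hright n))
    (fun n hn => ⟨(hslow n hn).1, (hslow n hn).2 _ (hright n)⟩)
  obtain ⟨n, htn⟩ := exists_mem_Ico_of_tendsto_atTop htop ht
  have hinc : |g t - g (a n)| ≤ M + s * (t - a n) := by
    cases hn : fast n
    · linarith [(hslow n hn).2 t (Ico_subset_Icc_self htn)]
    · linarith [hfast n hn t (Ico_subset_Icc_self htn), mul_nonneg hs (sub_nonneg.2 htn.1)]
  have hbreak_n : |g (a n) - g (a 0)| ≤ (M / d + s) * (a n - a 0) + M := by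
    have := hbreak n
    split_ifs at this <;> simp only [Function.comp] at this <;> linarith
  have hmid : (M / d + s) * (a n - a 0) + s * (t - a n) ≤ (M / d + s) * (t - a 0) := by
    have : 0 ≤ M / d * (t - a n) := mul_nonneg (by positivity) (sub_nonneg.2 htn.1)
    linarith
  linarith [abs_sub_le (g t) (g (a n)) (g (a 0))]

end Alternating

/-- Averaging argument: if `[0,∞)` is partitioned into consecutive intervals alternating
between "fast" intervals of length at most `t₀` on which `|y'| ≤ A y` and "slow" intervals
of length at least `d` on which `|y'| ≤ (ε/2) y`, then the exponential growth rate
`limsup (1/2t) log y(t)` is at most `A t₀ / (2 d) + ε / 4`. -/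
theorem averaging_growth_bound (y : ℝ → ℝ) (A t₀ d ε : ℝ)
    (hA : 0 ≤ A) (ht₀ : 0 < t₀) (hd : 0 < d) (hε : 0 < ε)
    (hpos : ∀ t, 0 ≤ t → 0 < y t)
    (hdiff : ∀ t, 0 ≤ t → DifferentiableAt ℝ y t)
    (a : ℕ → ℝ) (ha0 : a 0 = 0) (hmono : StrictMono a)
    (htop : Tendsto a atTop atTop)
    (fast : ℕ → Bool)
    (halt : ∀ n, fast (n + 1) = !fast n)
    (hfast : ∀ n, fast n = true →
      a (n + 1) - a n ≤ t₀ ∧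
        ∀ t ∈ Set.Icc (a n) (a (n + 1)), |deriv y t| ≤ A * y t)
    (hslow : ∀ n, fast n = false →
      d ≤ a (n + 1) - a n ∧
        ∀ t ∈ Set.Icc (a n) (a (n + 1)), |deriv y t| ≤ (ε / 2) * y t) :
    limsup (fun t : ℝ => Real.log (y t) / (2 * t)) atTop ≤
      A * t₀ / (2 * d) + ε / 4 := by
  have hnonneg : ∀ n, ∀ t ∈ Icc (a n) (a (n + 1)), 0 ≤ t := fun n t ht =>
    (ha0 ▸ hmono.monotone n.zero_le).trans ht.1
  have hlog : ∀ n c, (∀ t ∈ Icc (a n) (a (n + 1)), |deriv y t| ≤ c * y t) →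
      ∀ t ∈ Icc (a n) (a (n + 1)), |log (y t) - log (y (a n))| ≤ c * (t - a n) :=
    fun n _ hc _ ht => abs_log_sub_log_le_of_abs_deriv_le (fun s hs => hpos s (hnonneg n s hs))
      (fun s hs => hdiff s (hnonneg n s hs)) hc ht
  have hgrowth : ∀ t, 0 ≤ t →
      |log (y t) - log (y 0)| ≤ (A * t₀ / d + ε / 2) * t + 2 * (A * t₀) := fun t ht => by
    simpa [ha0] using abs_sub_le_of_alternating (g := fun t => log (y t)) (mul_nonneg hA ht₀.le)
      (by positivity) hd hmono.monotone htop halt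
      (fun n hn t ht => (hlog n A (hfast n hn).2 t ht).trans
        (mul_le_mul_of_nonneg_left (by linarith [ht.2, (hfast n hn).1]) hA))
      (fun n hn => ⟨(hslow n hn).1, hlog n _ (hslow n hn).2⟩) (ha0 ▸ ht)
  calc limsup (fun t => log (y t) / (2 * t)) atTop
      = limsup (fun t => log (y t) / 2 / t) atTop := by simp only [div_div]
    _ ≤ (A * t₀ / d + ε / 2) / 2 := by
      refine limsup_div_le_of_abs_le (K := (2 * (A * t₀) + |log (y 0)|) / 2) ?_
      filter_upwards [eventually_ge_atTop 0] with t ht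
      rw [abs_div, abs_two]
      linarith [hgrowth t ht, abs_sub_abs_le_abs_sub (log (y t)) (log (y 0))]
    _ = A * t₀ / (2 * d) + ε / 4 := by ring
end

section
/- Let $Y$ solve $Y'' + K Y = 0$ on $[0,\infty)$ with $|K(t)| \le L$ everywhere ($L>1$), and suppose moreover that $K(t) = 0$ outside a union of intervals $I_1, I_2, \ldots$ each of length at most $t_0$, with consecutive intervals separated by gaps of length at least $d$. Then for $0 < \epsilon < 1$, $\limsup_{t\to\infty}\frac{1}{2t}\log(\epsilon^2 Y(t)^2 + Y'(t)^2) \le \frac{L^2 t_0}{d\epsilon} + \frac{\epsilon}{2}$. In particular, if $d > 2L^2 t_0/\epsilon^2$, this limsup is strictly less than $\epsilon$. -/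
open Filter Real Set MeasureTheory Topology

/-!
The energy `y = ε² Y² + Y'²` satisfies `y' = 2 Y Y' (ε² - K)`, and AM-GM turns this into
`|y'| ≤ (|ε² - K| / ε) y`: the rate is `ε` where `K = 0` and at most `2 L² / ε` on the
intervals `[b j, c j]`. Integrating `(log (y + 1))'` over `[0, T]` gives
`log y(T) ≤ C + ε T + (2 L² / ε) |[0, T] ∩ ⋃ [b j, c j]|`, and the gaps of length `d` leave room
for at most `(T - b 0) / d + 1` of the intervals, each of length at most `t₀`, inside `[0, T]`.
Dividing by `2 T` and letting `T → ∞` gives the bound.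
-/

section

variable {f f' : ℝ → ℝ} {M a b : ℝ}

theorem abs_right_le_of_abs_deriv_le (hab : a ≤ b) (hf : ∀ t, HasDerivAt f (f' t) t)
    (hbound : ∀ t, |f' t| ≤ M * |f t|) : |f b| ≤ |f a| * exp (M * (b - a)) := by
  have := norm_le_gronwallBound_of_norm_deriv_right_le (ε := 0)
    (fun t _ => (hf t).continuousAt.continuousWithinAt) (fun t _ => (hf t).hasDerivWithinAt)
    le_rfl (fun t _ => by simpa using hbound t) b ⟨hab, le_rfl⟩
  simpa [gronwallBound_ε0] using this

theorem abs_left_le_of_abs_deriv_le (hab : a ≤ b) (hf : ∀ t, HasDerivAt f (f' t) t)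
    (hbound : ∀ t, |f' t| ≤ M * |f t|) : |f a| ≤ |f b| * exp (M * (b - a)) := by
  have hrefl : ∀ t, HasDerivAt (fun s => f (a + b - s)) (-f' (a + b - t)) t := fun t => by
    simpa using (hf (a + b - t)).comp_const_sub (a + b) t
  simpa using abs_right_le_of_abs_deriv_le hab hrefl (fun t => by simpa using hbound (a + b - t))

theorem neg_le_log_div_of_abs_deriv_le (hM : 0 ≤ M) (hf : ∀ t, HasDerivAt f (f' t) t)
    (hf0 : ∀ t, 0 ≤ f t) (hbound : ∀ t, |f' t| ≤ M * f t) {T : ℝ} (hT : 1 ≤ T) :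
    -(|log (f 0)| + M) / 2 ≤ log (f T) / (2 * T) := by
  have hbound' : ∀ t, |f' t| ≤ M * |f t| := fun t => by
    simpa [abs_of_nonneg (hf0 t)] using hbound t
  rcases (hf0 0).eq_or_lt with h0 | h0
  · have hT0 : f T = 0 := by
      simpa [← h0] using abs_right_le_of_abs_deriv_le (by linarith) hf hbound' (a := 0) (b := T)
    rw [hT0, log_zero, zero_div]
    linarith [abs_nonneg (log (f 0))]
  · have hgrow : f 0 ≤ f T * exp (M * T) := by
      simpa [abs_of_nonneg (hf0 _)] using
        abs_left_le_of_abs_deriv_le (by linarith) hf hbound' (a := 0) (b := T)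
    have hfT : 0 < f T := pos_of_mul_pos_left (h0.trans_le hgrow) (exp_pos _).le
    have hlog : log (f 0) ≤ log (f T) + M * T := by
      simpa [log_mul hfT.ne' (exp_pos _).ne'] using log_le_log h0 hgrow
    rw [div_le_div_iff₀ two_pos (by linarith)]
    nlinarith [neg_abs_le (log (f 0)), abs_nonneg (log (f 0))]

theorem log_add_one_sub_le_integral_of_deriv_le {φ : ℝ → ℝ} (hab : a ≤ b)
    (hf : ∀ t, HasDerivAt f (f' t) t) (hf0 : ∀ t, 0 ≤ f t) (hφ0 : ∀ t, 0 ≤ φ t)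
    (hle : ∀ t, f' t ≤ φ t * f t) (hφ : IntegrableOn φ (Icc a b)) :
    log (f b + 1) - log (f a + 1) ≤ ∫ t in a..b, φ t := by
  have hpos : ∀ t, 0 < f t + 1 := fun t => by linarith [hf0 t]
  have hderiv : ∀ t, HasDerivAt (fun s => log (f s + 1)) (f' t / (f t + 1)) t := fun t =>
    ((hf t).add_const 1).log (hpos t).ne'
  refine intervalIntegral.sub_le_integral_of_hasDeriv_right_of_le hab
    (fun t _ => (hderiv t).continuousAt.continuousWithinAt)
    (fun t _ => (hderiv t).hasDerivWithinAt) hφ fun t _ => ?_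
  rw [div_le_iff₀ (hpos t)]
  nlinarith [hle t, hφ0 t]

end

theorem limsup_le_of_eventually_le_of_tendsto {u φ : ℝ → ℝ} {l R : ℝ}
    (hlow : ∀ᶠ t in atTop, l ≤ u t) (hle : ∀ᶠ t in atTop, u t ≤ φ t)
    (hφ : Tendsto φ atTop (𝓝 R)) : limsup u atTop ≤ R :=
  hφ.limsup_eq ▸ limsup_le_limsup hle (isCoboundedUnder_le_of_eventually_le _ hlow)
    hφ.isBoundedUnder_le

theorem integrableOn_indicator_one {S : Set ℝ} (hS : MeasurableSet S) (a b : ℝ) :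
    IntegrableOn (S.indicator (1 : ℝ → ℝ)) (Icc a b) :=
  (integrableOn_const measure_Icc_lt_top.ne (by simp)).indicator hS

theorem intervalIntegral_const_add_mul_indicator_one {S : Set ℝ} (hS : MeasurableSet S)
    (ε M : ℝ) {T : ℝ} (hT : 0 ≤ T) :
    ∫ t in 0..T, (ε + M * S.indicator 1 t) = ε * T + M * volume.real (S ∩ Ioc 0 T) := by
  have hind : IntervalIntegrable (S.indicator (1 : ℝ → ℝ)) volume 0 T :=
    (intervalIntegrable_iff_integrableOn_Icc_of_le hT).2 (integrableOn_indicator_one hS 0 T)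
  rw [intervalIntegral.integral_add intervalIntegrable_const (hind.const_mul M),
    intervalIntegral.integral_const_mul, intervalIntegral.integral_const,
    intervalIntegral.integral_of_le hT, integral_indicator_one hS,
    measureReal_restrict_apply hS, inter_comm]
  simp [mul_comm]

theorem limsup_log_div_le_of_abs_deriv_le {f f' : ℝ → ℝ} {S : Set ℝ} {ε M α β T₁ : ℝ}
    (hS : MeasurableSet S)
    (hε : 0 ≤ ε) (hM : 0 ≤ M) (hf : ∀ t, HasDerivAt f (f' t) t) (hf0 : ∀ t, 0 ≤ f t)
    (hbound : ∀ t, |f' t| ≤ (ε + M * S.indicator 1 t) * f t)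
    (hvol : ∀ T ≥ T₁, volume.real (S ∩ Ioc 0 T) ≤ α * T + β) :
    limsup (fun t => log (f t) / (2 * t)) atTop ≤ (ε + M * α) / 2 := by
  have hind0 : ∀ t, 0 ≤ S.indicator (1 : ℝ → ℝ) t := indicator_nonneg fun _ _ => zero_le_one
  have hind1 : ∀ t, S.indicator (1 : ℝ → ℝ) t ≤ 1 := indicator_le_self' fun _ _ => zero_le_one
  have hglob : ∀ t, |f' t| ≤ (ε + M) * f t := fun t =>
    (hbound t).trans (mul_le_mul_of_nonneg_right (by nlinarith [hind1 t]) (hf0 t))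
  -- Without this lower bound the real `limsup` could be the junk value `sInf` of an unbounded set.
  have hlow : ∀ᶠ T in atTop, -(|log (f 0)| + (ε + M)) / 2 ≤ log (f T) / (2 * T) :=
    eventually_atTop.2 ⟨1, fun T hT => neg_le_log_div_of_abs_deriv_le (by positivity) hf hf0
      hglob hT⟩
  set C := log (f 0 + 1) + M * β
  have hup : ∀ᶠ T in atTop, log (f T) / (2 * T) ≤ C / 2 * T⁻¹ + (ε + M * α) / 2 := by
    refine eventually_atTop.2 ⟨max T₁ 1, fun T hT => ?_⟩
    have hT0 : 0 < T := by linarith [le_max_right T₁ 1]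
    have hint := log_add_one_sub_le_integral_of_deriv_le hT0.le hf hf0
      (fun t => add_nonneg hε (mul_nonneg hM (hind0 t))) (fun t => (le_abs_self _).trans (hbound t))
      ((integrableOn_const measure_Icc_lt_top.ne (by simp)).add
        ((integrableOn_indicator_one hS 0 T).const_mul M))
    rw [intervalIntegral_const_add_mul_indicator_one hS ε M hT0.le] at hint
    have hlog : log (f T) ≤ log (f T + 1) := by
      rcases (hf0 T).eq_or_lt with h | h
      · simp [← h]
      · exact log_le_log h (by linarith)
    have hvolT := hvol T (le_of_max_le_left hT)
    have hrhs : (C / 2 * T⁻¹ + (ε + M * α) / 2) * (2 * T) = C + (ε + M * α) * T := by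
      field_simp
    rw [div_le_iff₀ (by positivity), hrhs]
    nlinarith [mul_le_mul_of_nonneg_left hvolT hM]
  refine limsup_le_of_eventually_le_of_tendsto hlow hup ?_
  simpa using (tendsto_inv_atTop_zero.const_mul (C / 2)).add_const ((ε + M * α) / 2)

theorem volume_real_iUnion_Icc_inter_le {b c : ℕ → ℝ} {t₀ d T : ℝ} {s : Set ℝ} (hd : 0 < d)
    (hbc : ∀ j, b j ≤ c j) (hlen : ∀ j, c j - b j ≤ t₀) (hgap : ∀ j, c j + d ≤ b (j + 1))
    (hT : b 0 ≤ T) (hs : s ⊆ Iic T) :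
    volume.real ((⋃ j, Icc (b j) (c j)) ∩ s) ≤ t₀ * ((T - b 0) / d + 1) := by
  have hb : ∀ j : ℕ, b 0 + j * d ≤ b j := by
    intro j
    induction j with
    | zero => simp
    | succ n ih => push_cast; linarith [hgap n, hbc n]
  set N := ⌊(T - b 0) / d⌋₊
  have hsub : (⋃ j, Icc (b j) (c j)) ∩ s ⊆ ⋃ j ∈ Finset.range (N + 1), Icc (b j) (c j) := by
    rintro t ⟨ht, hts⟩
    obtain ⟨j, hj⟩ := mem_iUnion.1 ht
    refine mem_biUnion (Finset.mem_range.2 (Nat.lt_succ_of_le (Nat.le_floor ?_))) hj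
    rw [le_div_iff₀ hd]
    linarith [hb j, hj.1, mem_Iic.1 (hs hts)]
  have hN : (N : ℝ) ≤ (T - b 0) / d := Nat.floor_le (div_nonneg (by linarith) hd.le)
  have ht₀ : 0 ≤ t₀ := (sub_nonneg.2 (hbc 0)).trans (hlen 0)
  calc volume.real ((⋃ j, Icc (b j) (c j)) ∩ s)
      ≤ volume.real (⋃ j ∈ Finset.range (N + 1), Icc (b j) (c j)) :=
        measureReal_mono hsub (measure_biUnion_lt_top (Finset.finite_toSet _)
          fun j _ => measure_Icc_lt_top).ne
    _ ≤ ∑ j ∈ Finset.range (N + 1), volume.real (Icc (b j) (c j)) :=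
        measureReal_biUnion_finset_le _ _
    _ ≤ ∑ _j ∈ Finset.range (N + 1), t₀ :=
        Finset.sum_le_sum fun j _ => by simpa [Real.volume_real_Icc_of_le (hbc j)] using hlen j
    _ ≤ t₀ * ((T - b 0) / d + 1) := by
        rw [Finset.sum_const, Finset.card_range, nsmul_eq_mul, mul_comm]
        push_cast
        gcongr

theorem hasDerivAt_energy {Y Y' : ℝ → ℝ} {k t : ℝ} (ε : ℝ) (hY : HasDerivAt Y (Y' t) t)
    (hY' : HasDerivAt Y' (-(k * Y t)) t) :
    HasDerivAt (fun s => ε ^ 2 * Y s ^ 2 + Y' s ^ 2) (2 * Y t * Y' t * (ε ^ 2 - k)) t := by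
  refine (((hY.pow 2).const_mul (ε ^ 2)).add (hY'.pow 2)).congr_deriv ?_
  simp only [Nat.cast_ofNat, Nat.add_one_sub_one, pow_one]
  ring

theorem abs_two_mul_mul_mul_le (x v k : ℝ) {ε : ℝ} (hε : 0 < ε) :
    |2 * x * v * k| ≤ |k| / ε * (ε ^ 2 * x ^ 2 + v ^ 2) := by
  have hamgm : 2 * ε * (|x| * |v|) ≤ ε ^ 2 * x ^ 2 + v ^ 2 := by
    nlinarith [sq_nonneg (ε * |x| - |v|), sq_abs x, sq_abs v]
  rw [abs_mul, abs_mul, abs_mul, abs_two, div_mul_eq_mul_div, le_div_iff₀ hε]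
  nlinarith [abs_nonneg k]

theorem abs_sq_sub_le_of_abs_le {ε L k : ℝ} (hε : 0 ≤ ε) (hε1 : ε < 1) (hL : 1 < L)
    (hk : |k| ≤ L) : |ε ^ 2 - k| ≤ 2 * L ^ 2 := by
  nlinarith [abs_sub (ε ^ 2) k, abs_of_nonneg (pow_nonneg hε 2)]

theorem lyapunov_bound_oscillating_general (K Y Y' : ℝ → ℝ) (L t₀ d ε : ℝ)
    (hL : 1 < L) (hKL : ∀ t, |K t| ≤ L)
    (hd : 0 < d) (hε : 0 < ε) (hε1 : ε < 1)
    (b c : ℕ → ℝ)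
    (hbc : ∀ j, b j ≤ c j)
    (hlen : ∀ j, c j - b j ≤ t₀)
    (hgap : ∀ j, c j + d ≤ b (j + 1))
    (hKzero : ∀ t, t ∉ (⋃ j : ℕ, Set.Icc (b j) (c j)) → K t = 0)
    (hY : ∀ t, HasDerivAt Y (Y' t) t)
    (hY' : ∀ t, HasDerivAt Y' (-(K t * Y t)) t) :
    limsup (fun t : ℝ =>
        Real.log (ε ^ 2 * Y t ^ 2 + Y' t ^ 2) / (2 * t)) atTop ≤
      L ^ 2 * t₀ / (d * ε) + ε / 2 ∧
    (d > 2 * L ^ 2 * t₀ / ε ^ 2 →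
      limsup (fun t : ℝ =>
        Real.log (ε ^ 2 * Y t ^ 2 + Y' t ^ 2) / (2 * t)) atTop < ε) := by
  set S := ⋃ j, Icc (b j) (c j)
  have hrate : ∀ t, |ε ^ 2 - K t| / ε ≤ ε + 2 * L ^ 2 / ε * S.indicator 1 t := by
    intro t
    by_cases ht : t ∈ S
    · rw [indicator_of_mem ht, Pi.one_apply, mul_one]
      linarith [div_le_div_of_nonneg_right (abs_sq_sub_le_of_abs_le hε.le hε1 hL (hKL t)) hε.le]
    · rw [hKzero t ht, indicator_of_notMem ht, sub_zero, abs_of_pos (pow_pos hε 2)]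
      simp [sq, hε.ne']
  have hlim := limsup_log_div_le_of_abs_deriv_le (MeasurableSet.iUnion fun j => measurableSet_Icc)
    hε.le (by positivity) (fun t => hasDerivAt_energy ε (hY t) (hY' t)) (fun t => by positivity)
    (fun t => (abs_two_mul_mul_mul_le _ _ _ hε).trans
      (mul_le_mul_of_nonneg_right (hrate t) (by positivity)))
    (T₁ := b 0) (α := t₀ / d) (β := t₀ * (1 - b 0 / d)) fun T hT =>
      (volume_real_iUnion_Icc_inter_le hd hbc hlen hgap hT Ioc_subset_Iic_self).trans_eq
        (by field_simp; ring)
  have hR : (ε + 2 * L ^ 2 / ε * (t₀ / d)) / 2 = L ^ 2 * t₀ / (d * ε) + ε / 2 := by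
    field_simp
    ring
  rw [hR] at hlim
  refine ⟨hlim, fun hd2 => hlim.trans_lt ?_⟩
  rw [gt_iff_lt, div_lt_iff₀ (by positivity)] at hd2
  have : L ^ 2 * t₀ / (d * ε) < ε / 2 := by
    rw [div_lt_div_iff₀ (by positivity) two_pos]
    nlinarith
  linarith

/-- Quantitative Lyapunov exponent bound (core of Lemma 4.4): if `Y'' + K Y = 0` with
`|K| ≤ L` (`L > 1`), and `K` vanishes outside a union of intervals `[b j, c j]` of length
at most `t₀` separated by gaps of length at least `d`, then for `0 < ε < 1` the
exponential growth rate of `ε² Y² + (Y')²` is at most `L² t₀ / (d ε) + ε / 2`; in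
particular it is `< ε` whenever `d > 2 L² t₀ / ε²`. -/
theorem lyapunov_bound_oscillating (K Y Y' : ℝ → ℝ) (L t₀ d ε : ℝ)
    (hK : Continuous K) (hL : 1 < L) (hKL : ∀ t, |K t| ≤ L)
    (ht₀ : 0 < t₀) (hd : 0 < d) (hε : 0 < ε) (hε1 : ε < 1)
    (b c : ℕ → ℝ)
    (hbc : ∀ j, b j ≤ c j)
    (hlen : ∀ j, c j - b j ≤ t₀)
    (hgap : ∀ j, c j + d ≤ b (j + 1))
    (hKzero : ∀ t, t ∉ (⋃ j : ℕ, Set.Icc (b j) (c j)) → K t = 0)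
    (hY : ∀ t, HasDerivAt Y (Y' t) t)
    (hY' : ∀ t, HasDerivAt Y' (-(K t * Y t)) t) :
    limsup (fun t : ℝ =>
        Real.log (ε ^ 2 * Y t ^ 2 + Y' t ^ 2) / (2 * t)) atTop ≤
      L ^ 2 * t₀ / (d * ε) + ε / 2 ∧
    (d > 2 * L ^ 2 * t₀ / ε ^ 2 →
      limsup (fun t : ℝ =>
        Real.log (ε ^ 2 * Y t ^ 2 + Y' t ^ 2) / (2 * t)) atTop < ε) :=
  lyapunov_bound_oscillating_general K Y Y' L t₀ d ε hL hKL hd hε hε1 b c hbc hlen hgap hKzero hY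
    hY'
end

section
/- On a surface of revolution with profile radius function $r$, the Clairaut integral $r\sin\phi$ is constant along geodesics: if $\gamma$ is a unit-speed geodesic and $\phi(t)$ is the angle between $\gamma'(t)$ and the meridian through $\gamma(t)$, and $r(t)$ is the distance of $\gamma(t)$ from the axis of revolution, then $t \mapsto r(t)\sin\phi(t)$ is constant. -/
/-- Clairaut's relation: on a surface of revolution with metric `dl² + r(l)² dθ²`, for a
unit-speed geodesic `t ↦ (l(t), θ(t))` making angle `φ(t)` with the meridians, the
quantity `r sin φ` is constant along the geodesic. -/
theorem clairaut_relation (r : ℝ → ℝ) (hr : ContDiff ℝ (⊤ : ℕ∞) r) (hrpos : ∀ l, 0 < r l)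
    (l θ l' θ' φ : ℝ → ℝ)
    (hl : ∀ t, HasDerivAt l (l' t) t)
    (hθ : ∀ t, HasDerivAt θ (θ' t) t)
    -- geodesic equations of the metric `dl² + r(l)² dθ²`
    (hgeo_l : ∀ t, HasDerivAt l' (r (l t) * deriv r (l t) * θ' t ^ 2) t)
    (hgeo_θ : ∀ t, HasDerivAt θ' (-2 * (deriv r (l t) / r (l t)) * l' t * θ' t) t)
    -- unit speed
    (hunit : ∀ t, l' t ^ 2 + r (l t) ^ 2 * θ' t ^ 2 = 1)
    -- `φ(t)` is the angle between the velocity and the meridian direction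
    (hφ : ∀ t, Real.sin (φ t) = r (l t) * θ' t) :
    ∀ s t : ℝ, r (l s) * Real.sin (φ s) = r (l t) * Real.sin (φ t) := by
  have key : ∀ t, HasDerivAt (fun t => r (l t) ^ 2 * θ' t) 0 t := by
    intro t
    have hrl : HasDerivAt (fun t => r (l t)) (deriv r (l t) * l' t) t :=
      ((hr.differentiable (by simp) (l t)).hasDerivAt).comp t (hl t)
    have h1 : HasDerivAt (fun t => r (l t) ^ 2)
        (2 * r (l t) * (deriv r (l t) * l' t)) t := by
      have h : HasDerivAt (fun t => r (l t) * r (l t)) _ t := hrl.mul hrl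
      simp only [pow_two]
      convert h using 1
      ring
    have h2 : HasDerivAt (fun t => r (l t) ^ 2 * θ' t) _ t := h1.mul (hgeo_θ t)
    convert h2 using 1
    have hrne : r (l t) ≠ 0 := (hrpos (l t)).ne'
    field_simp
    ring
  have hconst : ∀ s t : ℝ, r (l s) ^ 2 * θ' s = r (l t) ^ 2 * θ' t := by
    intro s t
    exact is_const_of_deriv_eq_zero (fun x => (key x).differentiableAt)
      (fun x => (key x).deriv) s t
  intro s t
  rw [hφ, hφ]
  have := hconst s t
  nlinarith [this]
end
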